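/- arXiv:2310.11922 — 2 statements merged into one kernel-verified Lean document; each statement's English description precedes it below -/
import Mathlib

section
/- Let A be a unital C*-algebra, u a unitary in A and x ∈ A with ‖u − x‖ < 1/2 (so in particular x is invertible). Then ‖1 − |x|‖ ≤ ‖u − x‖·(2 + ‖u − x‖), and the unitary v = x|x|^{-1} satisfies ‖u − v‖ ≤ ‖u − x‖ + ‖x‖·‖1 − |x|^{-1}‖. -/
open Filter Topology

/-- Let `A` be a unital C*-algebra, `u` a unitary and `x ∈ A` with
`‖u - x‖ < 1/2` (so in particular `x` is invertible).  Then, with `m = |x|` the absolute value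
of `x` (i.e. the positive element with `m * m = x* x`), one has
`‖1 - |x|‖ ≤ ‖u - x‖ (2 + ‖u - x‖)`, the element `v = x |x|⁻¹` is a unitary, and
`‖u - v‖ ≤ ‖u - x‖ + ‖x‖ ‖1 - |x|⁻¹‖`. -/
theorem stmt1 {A : Type*} [CStarAlgebra A]
    (u x : A) (hu : u ∈ unitary A) (hx : ‖u - x‖ < 1 / 2) :
    IsUnit x ∧
    ∃ m : A, (∃ y : A, m = star y * y) ∧ m * m = star x * x ∧ IsUnit m ∧
      ‖1 - m‖ ≤ ‖u - x‖ * (2 + ‖u - x‖) ∧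
      x * Ring.inverse m ∈ unitary A ∧
      ‖u - x * Ring.inverse m‖ ≤ ‖u - x‖ + ‖x‖ * ‖1 - Ring.inverse m‖ := by
  letI := CStarAlgebra.spectralOrder A
  letI := CStarAlgebra.spectralOrderedRing A
  rcases subsingleton_or_nontrivial A with hA | hA
  · refine ⟨isUnit_of_subsingleton x, 1, ⟨1, Subsingleton.elim _ _⟩,
      Subsingleton.elim _ _, isUnit_one, ?_, ?_, ?_⟩
    · simp only [Subsingleton.elim (1 - (1 : A)) 0, norm_zero]
      positivity
    · exact Unitary.mem_iff.mpr ⟨Subsingleton.elim _ _, Subsingleton.elim _ _⟩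
    · simp only [Subsingleton.elim (u - x * Ring.inverse (1 : A)) 0, norm_zero]
      positivity
  have hu1 : star u * u = 1 := Unitary.mem_iff.mp hu |>.1
  have hun : ‖u‖ = 1 := CStarRing.norm_of_mem_unitary hu
  set ε := ‖u - x‖ with hε
  have hε0 : 0 ≤ ε := norm_nonneg _
  -- x is a unit
  have hx_unit : IsUnit x := by
    let U : Aˣ := ⟨u, star u, Unitary.mem_iff.mp hu |>.2, hu1⟩
    have hUi : ((↑U⁻¹ : A)) = star u := rfl
    have : ‖x - (U : A)‖ < ‖(↑U⁻¹ : A)‖⁻¹ := by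
      rw [hUi, norm_star, hun, inv_one, ← norm_neg]
      show ‖-(x - u)‖ < 1
      rw [neg_sub]
      linarith
    exact (U.ofNearby x this).isUnit
  have hs_unit : IsUnit (star x * x) := hx_unit.star.mul hx_unit
  have hs0 : (0 : A) ≤ star x * x := star_mul_self_nonneg x
  set m := CFC.sqrt (star x * x) with hm
  have hm0 : 0 ≤ m := CFC.sqrt_nonneg (a := star x * x)
  have hmsa : IsSelfAdjoint m := hm0.isSelfAdjoint
  have hmm : m * m = star x * x := CFC.sqrt_mul_sqrt_self _ hs0
  -- m is a unit
  have hm_unit : IsUnit m := by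
    obtain ⟨S, hS⟩ := hs_unit
    have hb : m * (m * ↑S⁻¹) = 1 := by
      rw [← mul_assoc, hmm, ← hS, S.mul_inv]
    have hc : (↑S⁻¹ * m) * m = 1 := by
      rw [mul_assoc, hmm, ← hS, S.inv_mul]
    have hbc : (m * ↑S⁻¹ : A) = ↑S⁻¹ * m := by
      calc (m * ↑S⁻¹ : A) = ((↑S⁻¹ * m) * m) * (m * ↑S⁻¹) := by rw [hc, one_mul]
        _ = (↑S⁻¹ * m) * (m * (m * ↑S⁻¹)) := by noncomm_ring
        _ = ↑S⁻¹ * m := by rw [hb, mul_one]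
    exact ⟨⟨m, m * ↑S⁻¹, hb, by rw [hbc]; exact hc⟩, rfl⟩
  set i := Ring.inverse m with hi
  have hmi : m * i = 1 := Ring.mul_inverse_cancel m hm_unit
  have him : i * m = 1 := Ring.inverse_mul_cancel m hm_unit
  have hisa : star i = i := by
    calc star i = star i * (m * i) := by rw [hmi, mul_one]
      _ = (star i * star m) * i := by rw [hmsa.star_eq, mul_assoc]
      _ = star (m * i) * i := by rw [star_mul]
      _ = i := by rw [hmi, star_one, one_mul]
  -- norm bound on ‖1 - m‖
  have hxn : ‖x‖ ≤ 1 + ε := by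
    calc ‖x‖ = ‖u - (u - x)‖ := by rw [sub_sub_cancel]
      _ ≤ ‖u‖ + ‖u - x‖ := norm_sub_le _ _
      _ = 1 + ε := by rw [hun]
  have hkey : (1 : A) - m * m = star u * (u - x) + (star u - star x) * x := by
    have : star u * (u - x) + (star u - star x) * x = star u * u - star x * x := by
      noncomm_ring
    rw [this, hu1, hmm]
  have hnorm2 : ‖(1 : A) - m * m‖ ≤ ε * (2 + ε) := by
    calc ‖(1 : A) - m * m‖ = ‖star u * (u - x) + (star u - star x) * x‖ := by rw [hkey]
      _ ≤ ‖star u * (u - x)‖ + ‖(star u - star x) * x‖ := norm_add_le _ _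
      _ ≤ ‖star u‖ * ‖u - x‖ + ‖star u - star x‖ * ‖x‖ := by
          gcongr <;> exact norm_mul_le _ _
      _ = ε + ε * ‖x‖ := by
          rw [norm_star, hun, one_mul, ← star_sub, norm_star]
      _ ≤ ε + ε * (1 + ε) := by gcongr
      _ = ε * (2 + ε) := by ring
  have hnorm1 : ‖(1 : A) - m‖ ≤ ε * (2 + ε) := by
    have hcfc1 : cfc (fun t : ℝ => 1 - t) m = 1 - m := by
      rw [cfc_sub (fun _ : ℝ => (1:ℝ)) (fun t : ℝ => t) m, cfc_const (1:ℝ) m,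
        cfc_id' ℝ m, map_one]
    have hcfc2 : cfc (fun t : ℝ => 1 - t ^ 2) m = 1 - m * m := by
      rw [cfc_sub (fun _ : ℝ => (1:ℝ)) (fun t : ℝ => t ^ 2) m, cfc_const (1:ℝ) m,
        map_one, cfc_pow_id (R := ℝ) m 2, sq]
    rw [← hcfc1]
    refine le_trans (norm_cfc_le (norm_nonneg _) fun t ht => ?_) hnorm2
    have ht0 : 0 ≤ t := spectrum_nonneg_of_nonneg hm0 ht
    have h1 : ‖(1 : ℝ) - t‖ ≤ ‖(1 : ℝ) - t ^ 2‖ := by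
      rcases le_total t 1 with h | h
      · rw [Real.norm_of_nonneg (by linarith), Real.norm_of_nonneg (by nlinarith)]
        nlinarith
      · rw [Real.norm_of_nonpos (by linarith), Real.norm_of_nonpos (by nlinarith)]
        nlinarith
    refine h1.trans ?_
    have := norm_apply_le_norm_cfc (fun t : ℝ => 1 - t ^ 2) m ht (by fun_prop) hmsa
    rwa [hcfc2] at this
  -- v = x * i is unitary
  have hvsv : star (x * i) * (x * i) = 1 := by
    calc star (x * i) * (x * i) = i * ((star x * x) * i) := by
          rw [star_mul, hisa, mul_assoc, mul_assoc]
      _ = i * (m * (m * i)) := by rw [← hmm, mul_assoc]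
      _ = 1 := by rw [hmi, mul_one, him]
  have hv_unit : IsUnit (x * i) := hx_unit.mul ⟨⟨i, m, him, hmi⟩, rfl⟩
  have hvvs : (x * i) * star (x * i) = 1 := by
    obtain ⟨V, hV⟩ := hv_unit
    have hvi : (x * i) * ↑V⁻¹ = 1 := by rw [← hV]; exact V.mul_inv
    have hsv : star (x * i) = (↑V⁻¹ : A) := by
      calc star (x * i) = star (x * i) * ((x * i) * ↑V⁻¹) := by rw [hvi, mul_one]
        _ = (star (x * i) * (x * i)) * ↑V⁻¹ := (mul_assoc _ _ _).symm
        _ = ↑V⁻¹ := by rw [hvsv, one_mul]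
    rw [hsv]
    exact hvi
  refine ⟨hx_unit, m, ⟨CFC.sqrt m, ?_⟩, hmm, hm_unit, hnorm1,
    Unitary.mem_iff.mpr ⟨hvsv, hvvs⟩, ?_⟩
  · rw [(CFC.sqrt_nonneg (a := m)).isSelfAdjoint.star_eq,
      CFC.sqrt_mul_sqrt_self m hm0]
  · calc ‖u - x * i‖ = ‖(u - x) + x * (1 - i)‖ := by
          rw [mul_sub, mul_one, sub_add_sub_cancel]
      _ ≤ ‖u - x‖ + ‖x * (1 - i)‖ := norm_add_le _ _
      _ ≤ ‖u - x‖ + ‖x‖ * ‖1 - i‖ := by gcongr; exact norm_mul_le _ _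
end

section
/- Let A be a unital C*-algebra and B ⊆ A a finite-dimensional unital C*-subalgebra. Then the map E_B : A → A defined by E_B(x) = ∫_{U(B)} u x u* dμ_B(u), with μ_B the normalized Haar measure on the compact group U(B), is a conditional expectation onto the relative commutant B' ∩ A, and satisfies ‖a − E_B(a)‖ ≤ max_{x ∈ Ball(B)} ‖ax − xa‖ for all a ∈ A. -/
/-!
Average the conjugations `a ↦ u a u*` over the unitary group `U(B)` against its normalized Haar
measure. Left invariance of the measure makes every average commute with each unitary of `B`, and
the unitaries of the C*-algebra `B` span it, so the averages lie in `B' ∩ A`; elements of `B' ∩ A`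
are fixed by each conjugation, hence by the average. Since `a - u a u* = (a u - u a) u*`, the
defect `‖a - E a‖` is an average of quantities bounded by the commutator norms `‖a u - u a‖`.
-/

open MeasureTheory

lemma CStarRing.norm_coe_unitary_le_one {E : Type*} [NormedRing E] [StarRing E] [CStarRing E]
    (u : unitary E) : ‖(u : E)‖ ≤ 1 := by
  rcases subsingleton_or_nontrivial E with _ | _
  · simp [Subsingleton.elim (u : E) 0]
  · exact (norm_coe_unitary u).le

lemma CStarRing.norm_unitary_conj {E : Type*} [NormedRing E] [StarRing E] [CStarRing E]
    (u : unitary E) (a : E) : ‖(u : E) * a * star (u : E)‖ = ‖a‖ := by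
  rw [← Unitary.coe_star, norm_mul_coe_unitary, norm_coe_unitary_mul]

lemma isCompact_unitary {E : Type*} [NormedRing E] [StarRing E] [CStarRing E] [ProperSpace E] :
    IsCompact (unitary E : Set E) :=
  Metric.isCompact_of_isClosed_isBounded isClosed_unitary <|
    (Metric.isBounded_closedBall (x := 0) (r := 1)).subset fun u hu ↦ by
      simpa using CStarRing.norm_coe_unitary_le_one ⟨u, hu⟩

instance {E : Type*} [NormedRing E] [StarRing E] [CStarRing E] [ProperSpace E] :
    CompactSpace (unitary E) :=
  isCompact_iff_compactSpace.mp isCompact_unitary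

section ConjAverage

variable {A G : Type*} [CStarAlgebra A] [Group G] [TopologicalSpace G] [SecondCountableTopology G]
  [MeasurableSpace G] [BorelSpace G] (μ : Measure G) [IsProbabilityMeasure μ] (ρ : G →ₜ* unitary A)

lemma integrable_conj (a : A) : Integrable (fun g ↦ (ρ g : A) * a * star (ρ g : A)) μ :=
  .of_bound (by fun_prop) ‖a‖ (.of_forall fun g ↦ (CStarRing.norm_unitary_conj _ a).le)

noncomputable def conjAverage : A →L[ℂ] A :=
  LinearMap.mkContinuous
    { toFun a := ∫ g, (ρ g : A) * a * star (ρ g : A) ∂μ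
      map_add' a b := by
        rw [← integral_add (integrable_conj μ ρ a) (integrable_conj μ ρ b)]
        simp only [mul_add, add_mul]
      map_smul' c a := by
        simp only [mul_smul_comm, smul_mul_assoc, integral_smul, RingHom.id_apply] }
    1 fun a ↦ by
      simpa using norm_integral_le_of_norm_le_const (μ := μ)
        (.of_forall fun g ↦ (CStarRing.norm_unitary_conj (ρ g) a).le)

lemma conjAverage_apply (a : A) :
    conjAverage μ ρ a = ∫ g, (ρ g : A) * a * star (ρ g : A) ∂μ :=
  rfl

lemma norm_conjAverage_le : ‖conjAverage μ ρ‖ ≤ 1 :=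
  LinearMap.mkContinuous_norm_le _ zero_le_one _

lemma conjAverage_eq_self {x : A} (hx : ∀ g, Commute (ρ g : A) x) : conjAverage μ ρ x = x := by
  have h (g : G) : (ρ g : A) * x * star (ρ g : A) = x := by
    rw [(hx g).eq, mul_assoc, Unitary.mul_star_self_of_mem (ρ g).2, mul_one]
  simp [conjAverage_apply, h]

lemma conjAverage_one : conjAverage μ ρ 1 = 1 :=
  conjAverage_eq_self μ ρ fun _ ↦ .one_right _

lemma conj_conjAverage [ContinuousMul G] [μ.IsMulLeftInvariant] (h : G) (a : A) :
    (ρ h : A) * conjAverage μ ρ a * star (ρ h : A) = conjAverage μ ρ a := by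
  let conjByH : A →L[ℂ] A := (ContinuousLinearMap.mul ℂ A (ρ h)).comp
      ((ContinuousLinearMap.mul ℂ A).flip (star (ρ h : A)))
  calc (ρ h : A) * conjAverage μ ρ a * star (ρ h : A)
      = conjByH (conjAverage μ ρ a) := by simp [conjByH, mul_assoc]
    _ = ∫ g, (ρ (h * g) : A) * a * star (ρ (h * g) : A) ∂μ := by
      rw [conjAverage_apply, ← conjByH.integral_comp_comm (integrable_conj μ ρ a)]
      simp [conjByH, mul_assoc]
    _ = conjAverage μ ρ a :=
      integral_mul_left_eq_self (fun g ↦ (ρ g : A) * a * star (ρ g : A)) h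

lemma commute_conjAverage [ContinuousMul G] [μ.IsMulLeftInvariant] (h : G) (a : A) :
    Commute (ρ h : A) (conjAverage μ ρ a) :=
  calc (ρ h : A) * conjAverage μ ρ a
      = (ρ h : A) * conjAverage μ ρ a * star (ρ h : A) * ρ h := by
        rw [mul_assoc _ (star _), Unitary.star_mul_self_of_mem (ρ h).2, mul_one]
    _ = conjAverage μ ρ a * ρ h := by rw [conj_conjAverage]

lemma conjAverage_mem_closure_convexHull (a : A) :
    conjAverage μ ρ a ∈
      closure (convexHull ℝ (Set.range fun g ↦ (ρ g : A) * a * star (ρ g : A))) :=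
  (convex_convexHull ℝ _).closure.integral_mem isClosed_closure
    (.of_forall fun g ↦ subset_closure (subset_convexHull ℝ _ ⟨g, rfl⟩)) (integrable_conj μ ρ a)

lemma norm_sub_conjAverage_le {a : A} {M : ℝ} (hM : ∀ g, ‖a * ρ g - ρ g * a‖ ≤ M) :
    ‖a - conjAverage μ ρ a‖ ≤ M := by
  have hsub : a - conjAverage μ ρ a = ∫ g, (a - (ρ g : A) * a * star (ρ g : A)) ∂μ := by
    rw [integral_sub (integrable_const a) (integrable_conj μ ρ a)]
    simp [conjAverage_apply]
  have hbound (g : G) : ‖a - (ρ g : A) * a * star (ρ g : A)‖ ≤ M := by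
    have : a - (ρ g : A) * a * star (ρ g : A) = (a * ρ g - ρ g * a) * star (ρ g : A) := by
      rw [sub_mul, mul_assoc a, Unitary.mul_star_self_of_mem (ρ g).2, mul_one]
    rw [this, ← Unitary.coe_star, CStarRing.norm_mul_coe_unitary]
    exact hM g
  simpa [hsub] using norm_integral_le_of_norm_le_const (μ := μ) (.of_forall hbound)

end ConjAverage

namespace StarSubalgebra

variable {A : Type*} [CStarAlgebra A] (B : StarSubalgebra ℂ A)

noncomputable instance cstarAlgebraOfFiniteDimensional [FiniteDimensional ℂ B] :
    CStarAlgebra B where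
  toCompleteSpace := FiniteDimensional.complete ℂ B

def unitaryInclusion : unitary B →ₜ* unitary A where
  toFun u := ⟨((u : B) : A), Unitary.map_mem B.subtype u.2⟩
  map_one' := rfl
  map_mul' _ _ := rfl
  continuous_toFun := by fun_prop

variable {B}

lemma commute_of_forall_unitary_commute [FiniteDimensional ℂ B] {x : A}
    (hx : ∀ u : unitary B, Commute ((u : B) : A) x) {b : A} (hb : b ∈ B) : Commute b x := by
  suffices h : ∀ y : B, Commute (y : A) x from h ⟨b, hb⟩
  intro y
  have hspan : y ∈ Submodule.span ℂ (unitary B : Set B) := by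
    rw [CStarAlgebra.span_unitary]
    trivial
  induction hspan using Submodule.span_induction with
  | mem u hu => exact hx ⟨u, hu⟩
  | zero => exact .zero_left x
  | add y z _ _ hy hz => exact hy.add_left hz
  | smul c y _ hy => exact hy.smul_left c

end StarSubalgebra

open StarSubalgebra in
/-- Let `A` be a unital C*-algebra and `B ⊆ A` a finite-dimensional unital
C*-subalgebra.  Then averaging over the compact unitary group `U(B)` with respect to its
normalized Haar measure yields a conditional expectation `E_B : A → B' ∩ A`, i.e. a norm-one
unital linear projection onto the relative commutant `B' ∩ A` whose values lie in the closed
convex hull of `{u a u* : u ∈ U(B)}`, satisfying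
`‖a - E_B a‖ ≤ max_{x ∈ Ball(B)} ‖a x - x a‖` for all `a ∈ A`. -/
theorem stmt10 {A : Type*} [CStarAlgebra A]
    (B : StarSubalgebra ℂ A) (hB : FiniteDimensional ℂ B) :
    ∃ E : A →L[ℂ] A, ‖E‖ ≤ 1 ∧ E 1 = 1 ∧
      (∀ a : A, ∀ b ∈ B, b * E a = E a * b) ∧
      (∀ x : A, (∀ b ∈ B, b * x = x * b) → E x = x) ∧
      (∀ a : A, E a ∈ closure (convexHull ℝ
        {y : A | ∃ u : A, u ∈ B ∧ u ∈ unitary A ∧ y = u * a * star u})) ∧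
      (∀ (a : A) (M : ℝ), (∀ x ∈ B, ‖x‖ ≤ 1 → ‖a * x - x * a‖ ≤ M) → ‖a - E a‖ ≤ M) := by
  let : MeasurableSpace (unitary B) := borel _
  have : BorelSpace (unitary B) := ⟨rfl⟩
  let μ := Measure.haarMeasure (⊤ : TopologicalSpace.PositiveCompacts (unitary B))
  have : IsProbabilityMeasure μ := ⟨Measure.haarMeasure_self⟩
  let ρ := unitaryInclusion B
  refine ⟨conjAverage μ ρ, norm_conjAverage_le μ ρ, conjAverage_one μ ρ,
    fun a b hb ↦ commute_of_forall_unitary_commute (fun u ↦ commute_conjAverage μ ρ u a) hb,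
    fun x hx ↦ conjAverage_eq_self μ ρ fun u ↦ hx _ (u : B).2,
    fun a ↦ closure_mono (convexHull_mono ?_) (conjAverage_mem_closure_convexHull μ ρ a),
    fun a M hM ↦ norm_sub_conjAverage_le μ ρ fun u ↦
      hM _ (u : B).2 (CStarRing.norm_coe_unitary_le_one (ρ u))⟩
  rintro _ ⟨u, rfl⟩
  exact ⟨_, (u : B).2, (ρ u).2, rfl⟩
end
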